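/- Let $w : \mathbb{R} \to \mathbb{R}$ be continuous, twice differentiable with $0 < L \leq w \leq U$ and $|w''| \leq M$ everywhere. Let $\omega > 0$ and $\sigma(\tau) = \omega\sqrt{\tau}$. Define the model with transition density $p_1(x|y,\tau) = k_{\sigma(\tau)}(x;y) w(x)/\int k_{\sigma(\tau)}(z;y) w(z)\,dz$ and two-step density $p_2(x|y,\tau) = \int p_1(x|z,\tau) p_1(z|y,\tau)\,dz$. Then there exists $C > 0$ such that for all $x, y \in \mathbb{R}$ and all $\tau > 0$: $(1 - C\tau)\, p_1(x|y, 2\tau) \leq p_2(x|y,\tau) \leq (1 + C\tau)\, p_1(x|y, 2\tau)$. (Note $p_1(x|y,2\tau)$ uses kernel standard deviation $\sqrt{2}\sigma(\tau)$.) -/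

import Mathlib

open MeasureTheory Real

/-- Gaussian density with mean `m` and standard deviation `σ`, evaluated at `y`. -/
noncomputable def gauss (σ m y : ℝ) : ℝ :=
  (Real.sqrt (2 * Real.pi) * σ)⁻¹ * Real.exp (-(y - m) ^ 2 / (2 * σ ^ 2))

/-- One-step transition density of the weighted Gaussian random walk with time
interval `τ` and kernel standard deviation `σ(τ) = ω √τ`; `p1 w ω τ y x` is the
density of a step from `y` to `x`. -/
noncomputable def p1 (w : ℝ → ℝ) (ω τ y x : ℝ) : ℝ :=
  gauss (ω * Real.sqrt τ) y x * w x / ∫ z : ℝ, gauss (ω * Real.sqrt τ) y z * w z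

/-- Two-step transition density, obtained via Chapman–Kolmogorov. -/
noncomputable def p2 (w : ℝ → ℝ) (ω τ y x : ℝ) : ℝ :=
  ∫ z : ℝ, p1 w ω τ z x * p1 w ω τ y z

/-!
Write `σ = ω √τ` and `Z_σ(m) = ∫ k_σ(z; m) w(z) dz` for the denominator of `p1`. As `Z_σ(m)` is
the mean of `w` under `N(m, σ²)`, a second-order Taylor expansion of `w` at `m` gives
`|Z_σ(m) - w(m)| ≤ M σ²`. In
`p2(x|y,τ) = (w x / Z_σ y) ∫ (w z / Z_σ z) k_σ(z; x) k_σ(z; y) dz`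
the factor `w z / Z_σ z` is therefore `1 + O(τ)`, and the Gaussian convolution identity
`∫ k_σ(z; x) k_σ(z; y) dz = k_{√2 σ}(x; y)` leaves `w x k_{√2 σ}(x; y) / Z_σ y`, which differs from
`p1(x|y,2τ) = k_{√2 σ}(y; x) w x / Z_{√2 σ} y` by the factor `Z_{√2 σ} y / Z_σ y = 1 + O(τ)`.
The error is linear in `τ` for every `τ > 0`, not only for small `τ`, because that factor is at
most `U / L`.
-/

open ProbabilityTheory

lemma gauss_eq_gaussianPDFReal {σ : ℝ} (hσ : 0 ≤ σ) (m : ℝ) :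
    gauss σ m = gaussianPDFReal m (σ ^ 2).toNNReal := by
  ext y
  rw [gauss, gaussianPDFReal, Real.coe_toNNReal _ (sq_nonneg σ),
    Real.sqrt_mul' _ (sq_nonneg σ), Real.sqrt_sq hσ]

lemma gauss_pos {σ : ℝ} (hσ : 0 < σ) (m y : ℝ) : 0 < gauss σ m y := by
  rw [gauss_eq_gaussianPDFReal hσ.le]
  exact gaussianPDFReal_pos _ _ _ (by simpa using hσ.ne')

lemma gauss_comm (σ m y : ℝ) : gauss σ m y = gauss σ y m := by
  unfold gauss; ring_nf

lemma integral_gauss_mul {σ : ℝ} (hσ : 0 < σ) (m : ℝ) (f : ℝ → ℝ) :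
    ∫ z, gauss σ m z * f z = ∫ z, f z ∂gaussianReal m (σ ^ 2).toNNReal := by
  rw [integral_gaussianReal_eq_integral_smul (by simpa using hσ.ne'),
    gauss_eq_gaussianPDFReal hσ.le]
  rfl

lemma integral_gauss {σ : ℝ} (hσ : 0 < σ) (m : ℝ) : ∫ z, gauss σ m z = 1 := by
  simpa using integral_gauss_mul hσ m 1

lemma integrable_gauss {σ : ℝ} (hσ : 0 ≤ σ) (m : ℝ) : Integrable (gauss σ m) := by
  rw [gauss_eq_gaussianPDFReal hσ]
  exact integrable_gaussianPDFReal _ _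

lemma gauss_mul_gauss {σ : ℝ} (hσ : 0 < σ) (x y z : ℝ) :
    gauss σ x z * gauss σ y z = gauss (√2 * σ) x y * gauss (σ / √2) ((x + y) / 2) z := by
  have hsqrt2 : (√2) ^ 2 = 2 := Real.sq_sqrt zero_le_two
  unfold gauss
  rw [mul_mul_mul_comm, ← Real.exp_add, mul_mul_mul_comm, ← Real.exp_add]
  congr 1
  · rw [← mul_inv, ← mul_inv]
    field_simp
  · congr 1
    rw [mul_pow, div_pow, hsqrt2]
    field_simp
    ring

lemma integral_gauss_mul_gauss {σ : ℝ} (hσ : 0 < σ) (x y : ℝ) :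
    ∫ z, gauss σ x z * gauss σ y z = gauss (√2 * σ) x y := by
  rw [funext (gauss_mul_gauss hσ x y), integral_const_mul, integral_gauss (by positivity), mul_one]

lemma abs_sub_sub_mul_sub_le {f f' f'' : ℝ → ℝ} {M : ℝ} (hf' : ∀ x, HasDerivAt f (f' x) x)
    (hf'' : ∀ x, HasDerivAt f' (f'' x) x) (hM : ∀ x, |f'' x| ≤ M) (y z : ℝ) :
    |f z - f y - f' y * (z - y)| ≤ M * (z - y) ^ 2 := by
  have hf'_lip : ∀ t ∈ Set.uIcc y z, ‖f' t - f' y‖ ≤ M * |z - y| := fun t ht =>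
    calc ‖f' t - f' y‖ ≤ M * ‖t - y‖ :=
          (convex_uIcc y z).norm_image_sub_le_of_norm_hasDerivWithin_le
            (fun u _ => (hf'' u).hasDerivWithinAt) (fun u _ => hM u) Set.left_mem_uIcc ht
      _ ≤ M * |z - y| :=
          mul_le_mul_of_nonneg_left (Set.abs_sub_left_of_mem_uIcc ht) ((abs_nonneg _).trans (hM y))
  have hg : ∀ t, HasDerivAt (fun t => f t - f' y * t) (f' t - f' y) t := fun t => by
    simpa using (hf' t).fun_sub ((hasDerivAt_id t).const_mul (f' y))
  have := (convex_uIcc y z).norm_image_sub_le_of_norm_hasDerivWithin_le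
    (fun t _ => (hg t).hasDerivWithinAt) hf'_lip Set.left_mem_uIcc Set.right_mem_uIcc
  rw [Real.norm_eq_abs, Real.norm_eq_abs, mul_assoc, abs_mul_abs_self] at this
  convert this using 2 <;> ring

lemma abs_integral_sub_apply_integral_le {μ : Measure ℝ} [IsProbabilityMeasure μ]
    (hμ : MemLp id 2 μ) {f f' f'' : ℝ → ℝ} {M : ℝ} (hf' : ∀ x, HasDerivAt f (f' x) x)
    (hf'' : ∀ x, HasDerivAt f' (f'' x) x) (hM : ∀ x, |f'' x| ≤ M) :
    |∫ x, f x ∂μ - f (∫ x, x ∂μ)| ≤ M * Var[id; μ] := by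
  set m := ∫ x, x ∂μ
  have hf : Continuous f := Differentiable.continuous fun x => (hf' x).differentiableAt
  have hx : Integrable (fun x : ℝ => x) μ := hμ.integrable one_le_two
  have hid : Integrable (fun x : ℝ => x - m) μ := hx.sub (integrable_const m)
  have hsq : Integrable (fun x => (x - m) ^ 2) μ := (hμ.sub (memLp_const m)).integrable_sq
  have hlin : Integrable (fun x => f m + f' m * (x - m)) μ :=
    (integrable_const _).add (hid.const_mul _)
  have hrem : Integrable (fun x => f x - (f m + f' m * (x - m))) μ :=
    (hsq.const_mul M).mono' (by fun_prop) (ae_of_all _ fun x => by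
      simpa [Real.norm_eq_abs, sub_add_eq_sub_sub] using abs_sub_sub_mul_sub_le hf' hf'' hM m x)
  have hmean : ∫ x, f' m * (x - m) ∂μ = 0 := by
    rw [integral_const_mul, integral_sub hx (integrable_const m)]
    simp [m]
  have hrem_eq : ∫ x, f x ∂μ - f m = ∫ x, f x - (f m + f' m * (x - m)) ∂μ := by
    have hf_int : Integrable f μ := (hrem.add hlin).congr (ae_of_all _ fun x => by simp)
    rw [integral_sub hf_int hlin, integral_add (integrable_const _) (hid.const_mul _), hmean]
    simp
  rw [hrem_eq, variance_eq_integral measurable_id.aemeasurable, ← integral_const_mul]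
  refine (abs_integral_le_integral_abs).trans (integral_mono hrem.abs (hsq.const_mul M) fun x => ?_)
  simpa [sub_add_eq_sub_sub] using abs_sub_sub_mul_sub_le hf' hf'' hM m x

noncomputable def normalizer (w : ℝ → ℝ) (σ m : ℝ) : ℝ := ∫ z, gauss σ m z * w z

section normalizer

variable {w : ℝ → ℝ} {σ : ℝ}

lemma normalizer_mem_Icc {L U : ℝ} (hσ : 0 < σ) (hw : Measurable w)
    (hLU : ∀ x, L ≤ w x ∧ w x ≤ U) (m : ℝ) : normalizer w σ m ∈ Set.Icc L U := by
  have hint : Integrable w (gaussianReal m (σ ^ 2).toNNReal) :=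
    .of_bound hw.aestronglyMeasurable (max |L| |U|)
      (ae_of_all _ fun x => abs_le_max_abs_abs (hLU x).1 (hLU x).2)
  rw [normalizer, integral_gauss_mul hσ]
  constructor
  · simpa using integral_mono (integrable_const L) hint fun x => (hLU x).1
  · simpa using integral_mono hint (integrable_const U) fun x => (hLU x).2

lemma abs_normalizer_sub_le {w' w'' : ℝ → ℝ} {M : ℝ} (hσ : 0 < σ)
    (hw' : ∀ x, HasDerivAt w (w' x) x) (hw'' : ∀ x, HasDerivAt w' (w'' x) x)
    (hM : ∀ x, |w'' x| ≤ M) (m : ℝ) :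
    |normalizer w σ m - w m| ≤ M * σ ^ 2 := by
  have := abs_integral_sub_apply_integral_le (memLp_id_gaussianReal (μ := m)
    (v := (σ ^ 2).toNNReal) 2) hw' hw'' hM
  simpa [normalizer, integral_gauss_mul hσ, sq_nonneg] using this

lemma abs_div_normalizer_sub_one_le {w' w'' : ℝ → ℝ} {L U M : ℝ} (hσ : 0 < σ)
    (hw' : ∀ x, HasDerivAt w (w' x) x) (hw'' : ∀ x, HasDerivAt w' (w'' x) x)
    (hM : ∀ x, |w'' x| ≤ M) (hL : 0 < L) (hLU : ∀ x, L ≤ w x ∧ w x ≤ U) (z : ℝ) :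
    |w z / normalizer w σ z - 1| ≤ M * σ ^ 2 / L := by
  have hw : Measurable w := (Differentiable.continuous fun x => (hw' x).differentiableAt).measurable
  have hZ := (normalizer_mem_Icc hσ hw hLU z).1
  rw [div_sub_one (hL.trans_le hZ).ne', abs_div, abs_of_pos (hL.trans_le hZ), abs_sub_comm]
  exact div_le_div₀ (mul_nonneg ((abs_nonneg _).trans (hM 0)) (sq_nonneg σ))
    (abs_normalizer_sub_le hσ hw' hw'' hM z) hL hZ

lemma measurable_normalizer (hw : Measurable w) : Measurable (normalizer w σ) := by
  have : StronglyMeasurable fun p : ℝ × ℝ => gauss σ p.1 p.2 * w p.2 := by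
    unfold gauss
    fun_prop
  exact this.integral_prod_right'.measurable

lemma abs_integral_div_normalizer_mul_gauss_sub_le {ε : ℝ} (hσ : 0 < σ) (hw : Measurable w)
    (hε : ∀ z, |w z / normalizer w σ z - 1| ≤ ε) (x y : ℝ) :
    |(∫ z, w z / normalizer w σ z * (gauss σ x z * gauss σ y z)) - gauss (√2 * σ) x y| ≤
      ε * gauss (√2 * σ) x y := by
  have hk : Integrable fun z => gauss σ x z * gauss σ y z := by
    rw [funext (gauss_mul_gauss hσ x y)]
    exact (integrable_gauss (by positivity) _).const_mul _
  have hr : Integrable fun z => w z / normalizer w σ z * (gauss σ x z * gauss σ y z) :=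
    hk.bdd_mul (c := 1 + ε) (hw.div (measurable_normalizer hw)).aestronglyMeasurable
      (ae_of_all _ fun z => by
        have := abs_le.1 (hε z)
        rw [Real.norm_eq_abs, abs_le]
        constructor <;> linarith)
  rw [← integral_gauss_mul_gauss hσ, ← integral_const_mul ε, ← integral_sub hr hk,
    ← Real.norm_eq_abs]
  refine norm_integral_le_of_norm_le (hk.const_mul ε) (ae_of_all _ fun z => ?_)
  have hk_nonneg : 0 ≤ gauss σ x z * gauss σ y z :=
    (mul_pos (gauss_pos hσ x z) (gauss_pos hσ y z)).le
  rw [← sub_one_mul, Real.norm_eq_abs, abs_mul, abs_of_nonneg hk_nonneg]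
  exact mul_le_mul_of_nonneg_right (hε z) hk_nonneg

end normalizer

lemma p2_eq_mul_integral (w : ℝ → ℝ) (ω τ x y : ℝ) :
    p2 w ω τ y x = w x / normalizer w (ω * √τ) y *
      ∫ z, w z / normalizer w (ω * √τ) z * (gauss (ω * √τ) x z * gauss (ω * √τ) y z) := by
  rw [p2, ← integral_const_mul]
  congr 1 with z
  rw [p1, p1, gauss_comm _ z x]
  unfold normalizer
  ring

lemma p1_two_mul (w : ℝ → ℝ) (ω τ x y : ℝ) :
    p1 w ω (2 * τ) y x = gauss (√2 * (ω * √τ)) x y * w x / normalizer w (√2 * (ω * √τ)) y := by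
  have hσ : ω * √(2 * τ) = √2 * (ω * √τ) := by rw [Real.sqrt_mul zero_le_two]; ring
  rw [p1, hσ, gauss_comm, normalizer]

lemma abs_p2_sub_p1_two_mul_le {w w' w'' : ℝ → ℝ} {L U M ω τ : ℝ}
    (hw' : ∀ x, HasDerivAt w (w' x) x) (hw'' : ∀ x, HasDerivAt w' (w'' x) x)
    (hM : ∀ x, |w'' x| ≤ M) (hL : 0 < L) (hLU : ∀ x, L ≤ w x ∧ w x ≤ U) (hω : 0 < ω)
    (hτ : 0 < τ) (x y : ℝ) :
    |p2 w ω τ y x - p1 w ω (2 * τ) y x| ≤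
      M * ω ^ 2 * (3 / L + U / L ^ 2) * τ * p1 w ω (2 * τ) y x := by
  rw [p2_eq_mul_integral, p1_two_mul]
  set σ := ω * √τ
  have hσ : 0 < σ := by positivity
  have hw : Measurable w := (Differentiable.continuous fun x => (hw' x).differentiableAt).measurable
  set s := M * σ ^ 2
  have hs : 0 ≤ s := mul_nonneg ((abs_nonneg _).trans (hM 0)) (sq_nonneg σ)
  set A := normalizer w σ y
  set B := normalizer w (√2 * σ) y
  set k := gauss (√2 * σ) x y
  set I := ∫ z, w z / normalizer w σ z * (gauss σ x z * gauss σ y z)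
  set P := k * w x / B
  have hA := normalizer_mem_Icc hσ hw hLU y
  have hB := normalizer_mem_Icc (σ := √2 * σ) (by positivity) hw hLU y
  have hA0 : 0 < A := hL.trans_le hA.1
  have hwx : 0 ≤ w x / A := div_nonneg (hL.le.trans (hLU x).1) hA0.le
  have hP : 0 ≤ P := div_nonneg (mul_nonneg (gauss_pos (by positivity) x y).le
    (hL.le.trans (hLU x).1)) (hL.le.trans hB.1)
  have hPB : P * B = k * w x := div_mul_cancel₀ _ (hL.trans_le hB.1).ne'
  have hI : |I - k| ≤ s / L * k := abs_integral_div_normalizer_mul_gauss_sub_le hσ hw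
    (abs_div_normalizer_sub_one_le hσ hw' hw'' hM hL hLU) x y
  have hBA : |B - A| ≤ 3 * s := by
    have hAw := abs_normalizer_sub_le hσ hw' hw'' hM y
    have hBw := abs_normalizer_sub_le (σ := √2 * σ) (by positivity) hw' hw'' hM y
    rw [mul_pow, Real.sq_sqrt zero_le_two] at hBw
    have := abs_sub_le B (w y) A
    rw [abs_sub_comm (w y)] at this
    linarith
  calc |w x / A * I - P| = |w x / A * (I - k) + P * ((B - A) / A)| := by
        congr 1; field_simp; linear_combination -hPB
    _ ≤ w x / A * (s / L * k) + P * (3 * s / L) := by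
        refine (abs_add_le _ _).trans (add_le_add ?_ ?_)
        · rw [abs_mul, abs_of_nonneg hwx]; gcongr
        · rw [abs_mul, abs_of_nonneg hP, abs_div, abs_of_pos hA0]
          gcongr
          exact hA.1
    _ = P * (B / A) * (s / L) + P * (3 * s / L) := by
        rw [show P * (B / A) = w x / A * k by rw [mul_div_assoc', hPB]; ring]; ring
    _ ≤ P * (U / L) * (s / L) + P * (3 * s / L) := by
        have hBA' : B / A ≤ U / L := div_le_div₀ (hL.le.trans (hB.1.trans hB.2)) hB.2 hL hA.1
        gcongr
    _ = M * ω ^ 2 * (3 / L + U / L ^ 2) * τ * P := by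
        simp only [s, σ, mul_pow, Real.sq_sqrt hτ.le]; field_simp; ring

theorem asymptotic_robustness_degree_two_general (w w' w'' : ℝ → ℝ) (L U M ω : ℝ)
    (hw' : ∀ x, HasDerivAt w (w' x) x)
    (hw'' : ∀ x, HasDerivAt w' (w'' x) x)
    (hM : ∀ x, |w'' x| ≤ M)
    (hL : 0 < L) (hLU : ∀ x, L ≤ w x ∧ w x ≤ U)
    (hω : 0 < ω) :
    ∃ C > 0, ∀ x y τ : ℝ, 0 < τ →
      (1 - C * τ) * p1 w ω (2 * τ) y x ≤ p2 w ω τ y x ∧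
        p2 w ω τ y x ≤ (1 + C * τ) * p1 w ω (2 * τ) y x := by
  have hM0 : 0 ≤ M := (abs_nonneg _).trans (hM 0)
  have hM1 : ∀ x, |w'' x| ≤ M + 1 := fun x => (hM x).trans (by linarith)
  have hU : 0 < U := hL.trans_le ((hLU 0).1.trans (hLU 0).2)
  refine ⟨(M + 1) * ω ^ 2 * (3 / L + U / L ^ 2), by positivity, fun x y τ hτ => ?_⟩
  have h := abs_le.1 (abs_p2_sub_p1_two_mul_le hw' hw'' hM1 hL hLU hω hτ x y)
  constructor <;> linarith [h.1, h.2]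

theorem asymptotic_robustness_degree_two (w w' w'' : ℝ → ℝ) (L U M ω : ℝ)
    (hw_cont : Continuous w)
    (hw' : ∀ x, HasDerivAt w (w' x) x)
    (hw'' : ∀ x, HasDerivAt w' (w'' x) x)
    (hM : ∀ x, |w'' x| ≤ M)
    (hL : 0 < L) (hLU : ∀ x, L ≤ w x ∧ w x ≤ U)
    (hω : 0 < ω) :
    ∃ C > 0, ∀ x y τ : ℝ, 0 < τ →
      (1 - C * τ) * p1 w ω (2 * τ) y x ≤ p2 w ω τ y x ∧
        p2 w ω τ y x ≤ (1 + C * τ) * p1 w ω (2 * τ) y x :=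
  asymptotic_robustness_degree_two_general w w' w'' L U M ω hw' hw'' hM hL hLU hω
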